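/- For every real polynomial q with deg q ≤ r − 1 and every integer 1 ≤ l ≤ r, the partial weighted sum satisfies ( Σ_{k=1}^{l} A_k · q(G_k) )^2 ≤ 2 · ∫_{−1}^{1} q(y)^2 dy. -/

import Mathlib

/-!
Gauss quadrature with `r` nodes is exact on polynomials of degree `< r` by Lagrange interpolation,
and on degree `< 2r` because `Leg r`, which vanishes at the nodes, is orthogonal to every polynomial
of degree `< r`: integrate by parts `r` times against `(X² - 1)^r`, whose derivatives of order `< r`
vanish at `±1`. Exactness on `ℓ_k²` makes the weights nonnegative, and exactness on `1` and `q²`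
gives `∑ A_k = 2` and `∑ A_k q(G_k)² = ∫ q²`. Cauchy–Schwarz with the weights `A_k`, applied to the
first `l` terms and then extended to all `r` by nonnegativity, gives the bound.
-/

open Polynomial MeasureTheory

/-- `Leg r` is the `r`-th (formal) derivative of `(X² − 1)^r`, a nonzero scalar
multiple of the degree-`r` Legendre polynomial. -/
noncomputable def Leg (r : ℕ) : Polynomial ℝ :=
  (fun p => Polynomial.derivative p)^[r] ((Polynomial.X ^ 2 - 1) ^ r)

/-- `G 1 < … < G r` are the Gauss points: the roots of `Leg r`, all in `(-1,1)`. -/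
def IsGaussPoints (r : ℕ) (G : ℕ → ℝ) : Prop :=
  (∀ k, 1 ≤ k → k < r → G k < G (k + 1)) ∧
  ∀ k, 1 ≤ k → k ≤ r → G k ∈ Set.Ioo (-1 : ℝ) 1 ∧ (Leg r).IsRoot (G k)

/-- `A k = ∫_{-1}^{1} ℓ_k` where `ℓ_k` is the Lagrange basis polynomial of degree
`≤ r - 1` at the Gauss points, i.e. `ℓ_k (G j) = δ_{jk}`. -/
def IsGaussWeights (r : ℕ) (G A : ℕ → ℝ) : Prop :=
  ∀ k, 1 ≤ k → k ≤ r → ∃ ℓ : Polynomial ℝ,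
    ℓ.natDegree ≤ r - 1 ∧
    (∀ j, 1 ≤ j → j ≤ r → ℓ.eval (G j) = if j = k then 1 else 0) ∧
    A k = ∫ x in (-1 : ℝ)..1, ℓ.eval x

open Finset intervalIntegral

namespace Polynomial

theorem degree_derivative_lt_of_degree_lt_succ {R : Type*} [Semiring R] {p : R[X]} {n : ℕ}
    (h : p.degree < ↑(n + 1)) : (derivative p).degree < n := by
  rw [degree_lt_iff_coeff_zero] at h ⊢
  intro m hm
  rw [coeff_derivative, h (m + 1) (by omega), zero_mul]

theorem eval_iterate_derivative_pow_eq_zero {R : Type*} [CommRing R] {p : R[X]} {t : R}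
    (ht : p.IsRoot t) {n i : ℕ} (hi : i < n) : (derivative^[i] (p ^ n)).eval t = 0 :=
  eval_eq_zero_of_dvd_of_eval_eq_zero (pow_sub_dvd_iterate_derivative_pow p n i) <| by
    rw [eval_pow, ht.eq_zero, zero_pow (by omega)]

theorem eq_sum_smul_of_eval_eq_ite {F ι : Type*} [Field F] [DecidableEq ι] {s : Finset ι}
    {v : ι → F} (hv : Set.InjOn v s) {ℓ : ι → F[X]} (hℓ : ∀ k ∈ s, (ℓ k).degree < #s)
    (hℓv : ∀ j ∈ s, ∀ k ∈ s, (ℓ k).eval (v j) = if j = k then 1 else 0)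
    {p : F[X]} (hp : p.degree < #s) : p = ∑ k ∈ s, p.eval (v k) • ℓ k := by
  refine eq_of_degrees_lt_of_eval_index_eq s hv hp ?_ fun j hj => ?_
  · simp only [← mem_degreeLT] at hℓ ⊢
    exact Submodule.sum_mem _ fun k hk => Submodule.smul_mem _ _ (hℓ k hk)
  · simp only [eval_finsetSum, eval_smul, smul_eq_mul]
    rw [sum_eq_single_of_mem j hj fun k hk hkj => by rw [hℓv j hj k hk, if_neg hkj.symm, mul_zero],
      hℓv j hj j hj, if_pos rfl, mul_one]

theorem intervalIntegrable_eval (p : ℝ[X]) (a b : ℝ) :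
    IntervalIntegrable (fun x => p.eval x) volume a b :=
  p.continuous.intervalIntegrable a b

theorem integral_eval_derivative (p : ℝ[X]) (a b : ℝ) :
    ∫ x in a..b, (derivative p).eval x = p.eval b - p.eval a :=
  integral_eq_sub_of_hasDerivAt (fun x _ => p.hasDerivAt x) (intervalIntegrable_eval _ a b)

theorem integral_eval_iterate_derivative_mul_eq_zero {P : ℝ[X]} {a b : ℝ} {j : ℕ}
    (ha : ∀ i < j, (derivative^[i] P).eval a = 0) (hb : ∀ i < j, (derivative^[i] P).eval b = 0)
    {s : ℝ[X]} (hs : s.degree < j) : ∫ x in a..b, (derivative^[j] P * s).eval x = 0 := by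
  induction j generalizing s with
  | zero =>
    obtain rfl : s = 0 := by simpa using hs
    simp
  | succ j ih =>
    have hparts : ∀ x, (derivative^[j + 1] P * s).eval x =
        (derivative (derivative^[j] P * s)).eval x - (derivative^[j] P * derivative s).eval x := by
      intro x
      rw [Function.iterate_succ_apply', derivative_mul]
      simp only [eval_add, eval_mul]
      ring
    rw [integral_congr fun x _ => hparts x,
      integral_sub (intervalIntegrable_eval _ a b) (intervalIntegrable_eval _ a b),
      integral_eval_derivative, ih (fun i hi => ha i (by omega)) (fun i hi => hb i (by omega))
        (degree_derivative_lt_of_degree_lt_succ hs)]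
    simp [ha j j.lt_succ_self, hb j j.lt_succ_self]

end Polynomial

theorem monic_X_sq_sub_one : (X ^ 2 - 1 : ℝ[X]).Monic := by
  simpa using monic_X_pow_sub_C (1 : ℝ) two_ne_zero

theorem natDegree_X_sq_sub_one_pow (r : ℕ) : ((X ^ 2 - 1 : ℝ[X]) ^ r).natDegree = r + r := by
  rw [monic_X_sq_sub_one.natDegree_pow, ← C_1, natDegree_X_pow_sub_C]
  ring

theorem coeff_leg_ne_zero (r : ℕ) : (Leg r).coeff r ≠ 0 := by
  have hlead : ((X ^ 2 - 1 : ℝ[X]) ^ r).coeff (r + r) = 1 := by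
    rw [← natDegree_X_sq_sub_one_pow]
    exact (monic_X_sq_sub_one.pow r).coeff_natDegree
  rw [Leg, coeff_iterate_derivative, hlead, nsmul_one]
  exact_mod_cast (Nat.descFactorial_pos.mpr (by omega)).ne'

theorem natDegree_leg (r : ℕ) : (Leg r).natDegree = r := by
  refine natDegree_eq_of_le_of_coeff_ne_zero ?_ (coeff_leg_ne_zero r)
  refine (natDegree_iterate_derivative _ r).trans ?_
  rw [natDegree_X_sq_sub_one_pow, Nat.add_sub_cancel]

theorem leg_ne_zero (r : ℕ) : Leg r ≠ 0 := fun h => coeff_leg_ne_zero r (by rw [h, coeff_zero])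

theorem integral_eval_leg_mul_eq_zero (r : ℕ) {s : ℝ[X]} (hs : s.degree < r) :
    ∫ x in (-1 : ℝ)..1, (Leg r * s).eval x = 0 := by
  have hroot_neg_one : (X ^ 2 - 1 : ℝ[X]).IsRoot (-1) := by simp
  have hroot_one : (X ^ 2 - 1 : ℝ[X]).IsRoot 1 := by simp
  exact integral_eval_iterate_derivative_mul_eq_zero
    (fun i hi => eval_iterate_derivative_pow_eq_zero hroot_neg_one hi)
    (fun i hi => eval_iterate_derivative_pow_eq_zero hroot_one hi) hs

section Gauss

variable {r : ℕ} {G A : ℕ → ℝ}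

theorem IsGaussPoints.injOn (hG : IsGaussPoints r G) : Set.InjOn G (Icc 1 r) := by
  refine StrictMonoOn.injOn (strictMonoOn_of_lt_succ (by simpa using Set.ordConnected_Icc) ?_)
  intro k _ hk hk'
  simp only [Order.succ_eq_add_one, coe_Icc, Set.mem_Icc] at hk hk' ⊢
  exact hG.1 k hk.1 (by omega)

theorem IsGaussWeights.sum_mul_eval_eq_integral (hA : IsGaussWeights r G A)
    (hG : IsGaussPoints r G) {p : ℝ[X]} (hp : p.degree < r) :
    ∑ k ∈ Icc 1 r, A k * p.eval (G k) = ∫ x in (-1 : ℝ)..1, p.eval x := by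
  choose! ℓ hℓ hℓG hAℓ using hA
  have hcard : #(Icc 1 r) = r := by rw [Nat.card_Icc, Nat.add_sub_cancel]
  have hinterp : p = ∑ k ∈ Icc 1 r, p.eval (G k) • ℓ k := by
    refine eq_sum_smul_of_eval_eq_ite hG.injOn (fun k hk => ?_) (fun j hj k hk => ?_)
      (by rwa [hcard])
    · obtain ⟨hk1, hkr⟩ := mem_Icc.1 hk
      rw [hcard]
      exact (degree_le_of_natDegree_le (hℓ k hk1 hkr)).trans_lt (by exact_mod_cast (by omega))
    · exact hℓG k (mem_Icc.1 hk).1 (mem_Icc.1 hk).2 j (mem_Icc.1 hj).1 (mem_Icc.1 hj).2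
  conv_rhs => rw [hinterp]
  simp only [eval_finsetSum, eval_smul, smul_eq_mul]
  rw [integral_finsetSum fun k _ => (intervalIntegrable_eval (ℓ k) _ _).const_mul _]
  refine sum_congr rfl fun k hk => ?_
  simp only [mem_Icc] at hk
  rw [intervalIntegral.integral_const_mul, hAℓ k hk.1 hk.2, mul_comm]

theorem IsGaussWeights.sum_mul_eval_eq_integral_of_natDegree_lt_two_mul
    (hA : IsGaussWeights r G A) (hG : IsGaussPoints r G) {p : ℝ[X]} (hp : p.natDegree < 2 * r) :
    ∑ k ∈ Icc 1 r, A k * p.eval (G k) = ∫ x in (-1 : ℝ)..1, p.eval x := by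
  set M := Leg r * C (Leg r).leadingCoeff⁻¹
  have hM : M.Monic := monic_mul_leadingCoeff_inv (leg_ne_zero r)
  have hMdeg : M.natDegree = r := by
    rw [natDegree_mul_leadingCoeff_inv _ (leg_ne_zero r), natDegree_leg]
  have hMroot : ∀ k ∈ Icc 1 r, M.eval (G k) = 0 := fun k hk => by
    simp only [mem_Icc] at hk
    rw [eval_mul, (hG.2 k hk.1 hk.2).2, zero_mul]
  have hrem : (p %ₘ M).degree < r := by
    simpa [degree_eq_natDegree hM.ne_zero, hMdeg] using degree_modByMonic_lt p hM
  have horth : ∫ x in (-1 : ℝ)..1, (M * (p /ₘ M)).eval x = 0 := by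
    rw [mul_assoc]
    refine integral_eval_leg_mul_eq_zero r (degree_le_natDegree.trans_lt ?_)
    have hquot := natDegree_C_mul_le (Leg r).leadingCoeff⁻¹ (p /ₘ M)
    rw [natDegree_divByMonic p hM, hMdeg] at hquot
    exact_mod_cast (by omega)
  calc ∑ k ∈ Icc 1 r, A k * p.eval (G k) = ∑ k ∈ Icc 1 r, A k * (p %ₘ M).eval (G k) :=
        sum_congr rfl fun k hk => by
          conv_lhs => rw [← modByMonic_add_div p M]
          rw [eval_add, eval_mul, hMroot k hk, zero_mul, add_zero]
    _ = ∫ x in (-1 : ℝ)..1, (p %ₘ M).eval x := hA.sum_mul_eval_eq_integral hG hrem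
    _ = (∫ x in (-1 : ℝ)..1, (p %ₘ M).eval x) + ∫ x in (-1 : ℝ)..1, (M * (p /ₘ M)).eval x := by
        rw [horth, add_zero]
    _ = ∫ x in (-1 : ℝ)..1, p.eval x := by
        rw [← integral_add (intervalIntegrable_eval _ _ _) (intervalIntegrable_eval _ _ _)]
        simp_rw [← eval_add, modByMonic_add_div]

theorem IsGaussWeights.nonneg (hA : IsGaussWeights r G A) (hG : IsGaussPoints r G) {k : ℕ}
    (hk : k ∈ Icc 1 r) : 0 ≤ A k := by
  obtain ⟨hk1, hkr⟩ := mem_Icc.1 hk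
  obtain ⟨ℓ, hℓ, hℓG, -⟩ := hA k hk1 hkr
  have hsq := hA.sum_mul_eval_eq_integral_of_natDegree_lt_two_mul hG (p := ℓ ^ 2)
    (by rw [natDegree_pow]; omega)
  rw [sum_eq_single_of_mem k hk fun j hj hjk => ?_, eval_pow, hℓG k hk1 hkr, if_pos rfl, one_pow,
    mul_one] at hsq
  · rw [hsq]
    exact integral_nonneg (by norm_num) fun x _ => by rw [eval_pow]; positivity
  · obtain ⟨hj1, hjr⟩ := mem_Icc.1 hj
    rw [eval_pow, hℓG j hj1 hjr, if_neg hjk]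
    ring

end Gauss

theorem gauss_partial_sum_bound_general (r : ℕ) (hr : 1 ≤ r) (G A : ℕ → ℝ)
    (hG : IsGaussPoints r G) (hA : IsGaussWeights r G A)
    (q : Polynomial ℝ) (hq : q.natDegree ≤ r - 1)
    (l : ℕ) (hlr : l ≤ r) :
    (∑ k ∈ Finset.Icc 1 l, A k * q.eval (G k)) ^ 2 ≤
      2 * ∫ x in (-1 : ℝ)..1, (q.eval x) ^ 2 := by
  have hsub : Icc 1 l ⊆ Icc 1 r := Icc_subset_Icc le_rfl hlr
  have hA0 : ∀ k ∈ Icc 1 r, 0 ≤ A k := fun k hk => hA.nonneg hG hk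
  have hAq0 : ∀ k ∈ Icc 1 r, 0 ≤ A k * q.eval (G k) ^ 2 := fun k hk =>
    mul_nonneg (hA0 k hk) (sq_nonneg _)
  have hweights : ∑ k ∈ Icc 1 r, A k = 2 := by
    simpa [one_add_one_eq_two] using hA.sum_mul_eval_eq_integral hG (p := 1) (by simp; omega)
  have hsquares : ∑ k ∈ Icc 1 r, A k * q.eval (G k) ^ 2 = ∫ x in (-1 : ℝ)..1, q.eval x ^ 2 := by
    have h := hA.sum_mul_eval_eq_integral_of_natDegree_lt_two_mul hG (p := q ^ 2)
      (by rw [natDegree_pow]; omega)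
    simpa only [eval_pow] using h
  calc (∑ k ∈ Icc 1 l, A k * q.eval (G k)) ^ 2
      ≤ (∑ k ∈ Icc 1 l, A k) * ∑ k ∈ Icc 1 l, A k * q.eval (G k) ^ 2 :=
        sum_sq_le_sum_mul_sum_of_sq_le_mul _ (fun k hk => hA0 k (hsub hk))
          (fun k hk => hAq0 k (hsub hk)) fun k _ => le_of_eq (by ring)
    _ ≤ (∑ k ∈ Icc 1 r, A k) * ∑ k ∈ Icc 1 r, A k * q.eval (G k) ^ 2 :=
        mul_le_mul (sum_le_sum_of_subset_of_nonneg hsub fun k hk _ => hA0 k hk)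
          (sum_le_sum_of_subset_of_nonneg hsub fun k hk _ => hAq0 k hk)
          (sum_nonneg fun k hk => hAq0 k (hsub hk)) (sum_nonneg hA0)
    _ = 2 * ∫ x in (-1 : ℝ)..1, q.eval x ^ 2 := by rw [hweights, hsquares]

/-- For every polynomial `q` of degree `≤ r − 1` and every `1 ≤ l ≤ r`, the
partial weighted sum satisfies `(Σ_{k=1}^{l} A_k q(G_k))² ≤ 2 ∫_{−1}^{1} q²`. -/
theorem gauss_partial_sum_bound (r : ℕ) (hr : 1 ≤ r) (G A : ℕ → ℝ)
    (hG : IsGaussPoints r G) (hA : IsGaussWeights r G A)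
    (q : Polynomial ℝ) (hq : q.natDegree ≤ r - 1)
    (l : ℕ) (hl1 : 1 ≤ l) (hlr : l ≤ r) :
    (∑ k ∈ Finset.Icc 1 l, A k * q.eval (G k)) ^ 2 ≤
      2 * ∫ x in (-1 : ℝ)..1, (q.eval x) ^ 2 :=
  gauss_partial_sum_bound_general r hr G A hG hA q hq l hlr
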